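/- arXiv:2601.20621 — 7 statements merged into one kernel-verified Lean document; each statement's English description precedes it below -/
import Mathlib

section
/- Let C be a category with pushouts in which every morphism is an epimorphism. Then an object S of C is saturated if and only if every morphism f : S ⟶ Y with domain S is an isomorphism. -/
open CategoryTheory

/-- An object `S` of a category is *saturated* if for every pair of morphisms
`g : Y ⟶ S` and `j : Y ⟶ Y'` there exists a unique `j' : Y' ⟶ S` with `j ≫ j' = g`. -/
def Saturated {C : Type*} [Category C] (S : C) : Prop :=
  ∀ ⦃Y Y' : C⦄ (g : Y ⟶ S) (j : Y ⟶ Y'), ∃! j' : Y' ⟶ S, j ≫ j' = g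

/-- In a category with pushouts in which every morphism is an epimorphism, an object `S` is
saturated if and only if every morphism with domain `S` is an isomorphism. -/
theorem saturated_iff_forall_isIso
    {C : Type*} [Category C] [Limits.HasPushouts C]
    (hepi : ∀ ⦃X Y : C⦄ (f : X ⟶ Y), Epi f) (S : C) :
    Saturated S ↔ ∀ (Y : C) (f : S ⟶ Y), IsIso f := by
  constructor
  · intro hsat Y f
    obtain ⟨r, hr, -⟩ := hsat (𝟙 S) f
    refine ⟨r, hr, ?_⟩
    have := hepi f
    have : f ≫ r ≫ f = f ≫ 𝟙 Y := by rw [← Category.assoc, hr]; simp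
    exact (cancel_epi f).mp this
  · intro h Y Y' g j
    have hinl : IsIso (Limits.pushout.inl g j) := h _ _
    refine ⟨Limits.pushout.inr g j ≫ inv (Limits.pushout.inl g j), ?_, ?_⟩
    · show j ≫ _ = g
      rw [← Category.assoc, ← Limits.pushout.condition]
      simp
    · intro k hk
      have := hepi j
      exact (cancel_epi j).mp (by rw [hk, ← Category.assoc, ← Limits.pushout.condition]; simp)
end

section
/- Let C be a category with pushouts in which every morphism is an epimorphism, and assume that every countable chain of morphisms stabilizes: for every sequence of objects Y : ℕ → C and morphisms j n : Y n ⟶ Y (n+1) there exists n₀ such that j n is an isomorphism for all n ≥ n₀. Then every object X of C admits a saturation η : X ⟶ S. -/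
open CategoryTheory

/-- In a category with pushouts in which every morphism is an epimorphism and in which every
countable chain of morphisms stabilizes, every object admits a saturation, i.e. a morphism
`η : X ⟶ S` into a saturated object `S`. -/
theorem exists_saturation
    {C : Type*} [Category C] [Limits.HasPushouts C]
    (hepi : ∀ ⦃X Y : C⦄ (f : X ⟶ Y), Epi f)
    (hchain : ∀ (Y : ℕ → C) (j : ∀ n, Y n ⟶ Y (n + 1)),
      ∃ n₀, ∀ n, n₀ ≤ n → IsIso (j n))
    (X : C) :
    ∃ (S : C) (_η : X ⟶ S), Saturated S := by
  -- Step 1: find `S` under `X` such that every morphism out of `S` is a split mono.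
  obtain ⟨S, η, hS⟩ : ∃ (S : C) (_ : X ⟶ S), ∀ (Z : C) (w : S ⟶ Z),
      ∃ w' : Z ⟶ S, w ≫ w' = 𝟙 S := by
    by_contra hc
    push_neg at hc
    choose Z w hw using hc
    let F : ℕ → Σ S : C, X ⟶ S :=
      fun n => Nat.rec ⟨X, 𝟙 X⟩ (fun _ p => ⟨Z p.1 p.2, p.2 ≫ w p.1 p.2⟩) n
    obtain ⟨n₀, hn⟩ := hchain (fun n => (F n).1) (fun n => w (F n).1 (F n).2)
    have hiso : IsIso (w (F n₀).1 (F n₀).2) := hn n₀ le_rfl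
    exact hw (F n₀).1 (F n₀).2 (inv (w (F n₀).1 (F n₀).2)) (IsIso.hom_inv_id _)
  refine ⟨S, η, ?_⟩
  intro Y Y' g j
  obtain ⟨w', hw'⟩ := hS _ (Limits.pushout.inr j g)
  refine ⟨Limits.pushout.inl j g ≫ w', ?_, ?_⟩
  · show j ≫ (Limits.pushout.inl j g ≫ w') = g
    rw [← Category.assoc, Limits.pushout.condition, Category.assoc, hw', Category.comp_id]
  · intro y hy
    haveI := hepi j
    have : j ≫ y = j ≫ (Limits.pushout.inl j g ≫ w') := by
      rw [hy, ← Category.assoc, Limits.pushout.condition, Category.assoc, hw',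
        Category.comp_id]
    exact (cancel_epi j).mp this
end

section
/- Let X be a schematic surface over k. Then the affinisation morphism α_X : X ⟶ Spec Γ(X, O_X) is dominant. Moreover, if the Krull dimension of the ring Γ(X, O_X) is at most 1, then α_X is surjective. -/
open CategoryTheory AlgebraicGeometry TopologicalSpace

universe u

/-- A *schematic surface* over an algebraically closed field `k` is a scheme `X` together with
a structure morphism `f : X ⟶ Spec k` such that `X` is integral, `f` is separated and of finite
type, the underlying topological space of `X` has Krull dimension `2`, and `X` is normal, i.e.
every stalk of the structure sheaf is an integrally closed domain. -/
def IsSchematicSurface {k : Type u} [Field k] [IsAlgClosed k]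
    (X : Scheme.{u}) (f : X ⟶ Spec (CommRingCat.of k)) : Prop :=
  IsIntegral X ∧ IsSeparated f ∧ LocallyOfFiniteType f ∧ QuasiCompact f ∧
    topologicalKrullDim X = 2 ∧
    ∀ x : X, IsDomain (X.presheaf.stalk x) ∧ IsIntegrallyClosed (X.presheaf.stalk x)

/-- An open immersion of schemes is *big* if the complement of its set-theoretic image
is a finite set. -/
def IsBigOpenImmersion {X Y : Scheme.{u}} (j : X ⟶ Y) : Prop :=
  IsOpenImmersion j ∧ (Set.range j.base)ᶜ.Finite

/-- A scheme `X` is *scheme-saturated* (relative to `k`) if every big open immersion of `X`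
into a schematic surface over `k` is an isomorphism. -/
def IsSchemeSaturated (k : Type u) [Field k] [IsAlgClosed k] (X : Scheme.{u}) : Prop :=
  ∀ (Y : Scheme.{u}) (g : Y ⟶ Spec (CommRingCat.of k)),
    IsSchematicSurface Y g → ∀ j : X ⟶ Y, IsBigOpenImmersion j → IsIso j


section Aux

open TopCat IsLocalRing

/-- Membership in the prime ideal attached to a point by the affinisation morphism. -/
lemma mem_toSpecΓ_base_iff (X : Scheme.{u}) (x : X) (a : Γ(X, ⊤)) :
    a ∈ (X.toSpecΓ.base x).asIdeal ↔
      X.presheaf.germ ⊤ x trivial a ∈ maximalIdeal (X.presheaf.stalk x) :=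
  Iff.rfl

/-- On an affine open, the affinisation morphism is computed by `primeIdealOf`. -/
lemma toSpecΓ_base_eq_comap {X : Scheme.{u}} {U : X.Opens} (hU : IsAffineOpen U)
    (x : X) (hx : x ∈ U) :
    X.toSpecΓ.base x = PrimeSpectrum.comap (X.presheaf.map (homOfLE (le_top : U ≤ ⊤)).op).hom
      (hU.primeIdealOf ⟨x, hx⟩) := by
  have h1 : X.presheaf.germ ⊤ x trivial =
      X.presheaf.map (homOfLE (le_top : U ≤ ⊤)).op ≫ X.presheaf.germ U x hx :=
    (X.presheaf.germ_res (homOfLE (le_top : U ≤ ⊤)) x hx).symm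
  rw [Scheme.toSpecΓ_apply]
  change Spec.map (X.presheaf.germ ⊤ x trivial) _ = _
  rw [hU.primeIdealOf_eq_map_closedPoint, h1, Spec.map_comp]
  rfl

end Aux

/-- The affinisation morphism `α_X : X ⟶ Spec Γ(X, O_X)` of a schematic surface over `k` is
dominant; moreover, if the Krull dimension of `Γ(X, O_X)` is at most `1`, then it is
surjective. -/
theorem affinisation_dominant_and_surjective
    {k : Type u} [Field k] [IsAlgClosed k]
    (X : Scheme.{u}) (f : X ⟶ Spec (CommRingCat.of k))
    (hX : IsSchematicSurface X f) :
    Dense (Set.range X.toSpecΓ.base) ∧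
      (ringKrullDim Γ(X, ⊤) ≤ 1 → Function.Surjective X.toSpecΓ.base) := by
  obtain ⟨hInt, -, -, hQC, -, -⟩ := hX
  have : IsIntegral X := hInt
  have hκinj : Function.Injective (X.presheaf.germ ⊤ (genericPoint X) trivial) :=
    germ_injective_of_isIntegral X (U := ⊤) (genericPoint X) trivial
  -- the generic point maps to the zero ideal
  have hgen : X.toSpecΓ.base (genericPoint X) = ⟨⊥, Ideal.bot_prime⟩ := by
    refine PrimeSpectrum.ext ?_
    refine Ideal.ext fun a => ?_
    rw [mem_toSpecΓ_base_iff, Ideal.mem_bot]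
    constructor
    · intro h
      by_contra ha
      have h0 : X.presheaf.germ ⊤ (genericPoint X) trivial a ≠ 0 := by
        intro h'
        exact ha (hκinj (by simpa using h'))
      exact (IsLocalRing.mem_maximalIdeal _).mp h (isUnit_iff_ne_zero.mpr h0)
    · rintro rfl
      simpa using (IsLocalRing.maximalIdeal _).zero_mem
  constructor
  · -- density
    have h1 : Dense ({(⟨⊥, Ideal.bot_prime⟩ : PrimeSpectrum Γ(X, ⊤))} :
        Set (PrimeSpectrum Γ(X, ⊤))) := by
      rw [dense_iff_closure_eq, PrimeSpectrum.closure_singleton]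
      exact PrimeSpectrum.zeroLocus_bot
    exact h1.mono (Set.singleton_subset_iff.mpr ⟨genericPoint X, hgen⟩)
  · intro hdim p
    by_cases hp : p.asIdeal = ⊥
    · exact ⟨genericPoint X, hgen.trans (PrimeSpectrum.ext hp.symm)⟩
    classical
    obtain ⟨t, ht, ht0⟩ := Submodule.exists_mem_ne_zero_of_ne_bot hp
    -- a finite affine cover
    have : CompactSpace X :=
      ⟨by simpa using hQC.isCompact_preimage Set.univ isOpen_univ isCompact_univ⟩
    obtain ⟨s, hs⟩ := isCompact_univ.elim_finite_subcover
      (fun x : X => ((X.affineCover.f (X.affineCover.idx x)).opensRange : Set X))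
      (fun x => (X.affineCover.f (X.affineCover.idx x)).opensRange.isOpen)
      (fun x _ => Set.mem_iUnion.mpr ⟨x, X.affineCover.covers x⟩)
    let ι := {x : X // x ∈ s}
    let U : ι → X.Opens := fun i => (X.affineCover.f (X.affineCover.idx i.1)).opensRange
    have hUa : ∀ i, IsAffineOpen (U i) := fun i => isAffineOpen_opensRange _
    have hUmem : ∀ i : ι, (i : X) ∈ U i := fun i => X.affineCover.covers i.1
    have hcover : (⊤ : X.Opens) ≤ ⨆ i, U i := by
      intro x _
      obtain ⟨y, hy, hxy⟩ := Set.mem_iUnion₂.mp (hs (Set.mem_univ x))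
      exact Opens.mem_iSup.mpr ⟨⟨y, hy⟩, hxy⟩
    have hη : ∀ i, genericPoint X ∈ U i := fun i =>
      ((genericPoint_spec X).mem_open_set_iff (U i).isOpen).mpr ⟨i.1, Set.mem_univ _, hUmem i⟩
    set κ := X.presheaf.germ ⊤ (genericPoint X) trivial with hκ
    let g : ∀ i, Γ(X, U i) ⟶ X.presheaf.stalk (genericPoint X) :=
      fun i => X.presheaf.germ (U i) (genericPoint X) (hη i)
    let ρ : ∀ i, Γ(X, ⊤) ⟶ Γ(X, U i) :=
      fun i => X.presheaf.map (homOfLE (le_top : U i ≤ ⊤)).op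
    have hgρ : ∀ i a, g i (ρ i a) = κ a := fun i a =>
      X.presheaf.germ_res_apply (homOfLE (le_top : U i ≤ ⊤)) (genericPoint X) (hη i) a
    have hκt0 : κ t ≠ 0 := fun h => ht0 (hκinj (by simpa using h))
    -- there is an index where `1/t` is not defined even after localizing away from `p`
    have key : ∃ i : ι, ¬ ∃ (a : Γ(X, U i)) (s' : Γ(X, ⊤)),
        s' ∉ p.asIdeal ∧ κ s' = κ t * g i a := by
      by_contra hbad
      push_neg at hbad
      choose a sE hsE heqE using hbad
      have hsP : (∏ i : ι, sE i) ∈ p.asIdeal.primeCompl (hp := p.isPrime) :=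
        Submonoid.prod_mem _ (fun i _ => hsE i)
      let w : ∀ i : ι, Γ(X, U i) := fun i => a i * ρ i (∏ j ∈ Finset.univ.erase i, sE j)
      have hw : ∀ i, κ t * g i (w i) = κ (∏ i : ι, sE i) := by
        intro i
        have : κ t * g i (w i) = (κ t * g i (a i)) * κ (∏ j ∈ Finset.univ.erase i, sE j) := by
          simp only [w, map_mul, hgρ]; ring
        rw [this, ← heqE i, ← map_mul, Finset.mul_prod_erase _ _ (Finset.mem_univ i)]
      have hcompat : TopCat.Presheaf.IsCompatible X.sheaf.1 U w := by
        intro i j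
        apply germ_injective_of_isIntegral X (U := U i ⊓ U j) (genericPoint X) ⟨hη i, hη j⟩
        have hi : X.presheaf.germ (U i ⊓ U j) (genericPoint X) ⟨hη i, hη j⟩
            (X.sheaf.1.map (Opens.infLELeft (U i) (U j)).op (w i)) = g i (w i) :=
          X.presheaf.germ_res_apply (Opens.infLELeft (U i) (U j)) (genericPoint X) _ (w i)
        have hj : X.presheaf.germ (U i ⊓ U j) (genericPoint X) ⟨hη i, hη j⟩
            (X.sheaf.1.map (Opens.infLERight (U i) (U j)).op (w j)) = g j (w j) :=
          X.presheaf.germ_res_apply (Opens.infLERight (U i) (U j)) (genericPoint X) _ (w j)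
        rw [hi, hj]
        exact mul_left_cancel₀ hκt0 ((hw i).trans (hw j).symm)
      obtain ⟨W, hW, -⟩ := X.sheaf.existsUnique_gluing' U ⊤
        (fun i => homOfLE le_top) hcover w hcompat
      let W' : Γ(X, ⊤) := W
      have hW' : ∀ i, ρ i W' = w i := hW
      obtain ⟨i0⟩ : Nonempty ι := by
        by_contra hne
        rw [not_nonempty_iff] at hne
        have h := hcover (show genericPoint X ∈ (⊤ : X.Opens) from trivial)
        rw [show (⨆ i, U i) = ⊥ from by simpa using iSup_of_empty U] at h
        exact h
      have e2 : κ (∏ i : ι, sE i) = κ (t * W') := by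
        rw [map_mul, ← hw i0, ← hW' i0, hgρ]
      exact hsP (hκinj e2 ▸ Ideal.mul_mem_right W' p.asIdeal ht)
    obtain ⟨i0, hbad⟩ := key
    -- find a prime of the affine piece lying over `p`
    let S' : Submonoid Γ(X, U i0) := Submonoid.map ((ρ i0).hom : Γ(X, ⊤) →* Γ(X, U i0))
      (p.asIdeal.primeCompl (hp := p.isPrime))
    have hdisj : Disjoint ((Ideal.span {ρ i0 t} : Ideal Γ(X, U i0)) : Set Γ(X, U i0))
        (S' : Set Γ(X, U i0)) := by
      rw [Set.disjoint_left]
      rintro x hx hxS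
      obtain ⟨s', hs', hmap⟩ := hxS
      have hmap' : ρ i0 s' = x := hmap
      obtain ⟨c, hc⟩ := Ideal.mem_span_singleton'.mp hx
      refine hbad ⟨c, s', hs', ?_⟩
      rw [← hgρ i0 s', hmap', ← hc, map_mul, hgρ i0 t]
      exact mul_comm _ _
    obtain ⟨q, hqprime, hqt, hqdisj⟩ := Ideal.exists_le_prime_disjoint _ S' hdisj
    let y : PrimeSpectrum Γ(X, U i0) := ⟨q, hqprime⟩
    set x := (hUa i0).fromSpec.base y with hxdef
    have hx : x ∈ (U i0 : Set X) := by
      rw [← (hUa i0).range_fromSpec]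
      exact ⟨y, rfl⟩
    have hpi : (hUa i0).primeIdealOf ⟨x, hx⟩ = y := by
      have hinj : Function.Injective ((hUa i0).fromSpec.base) :=
        PresheafedSpace.IsOpenImmersion.base_open.injective
      exact hinj (((hUa i0).fromSpec_primeIdealOf ⟨x, hx⟩).trans hxdef)
    refine ⟨x, ?_⟩
    rw [toSpecΓ_base_eq_comap (hUa i0) x hx, hpi]
    -- it remains to show the contraction of `q` is `p`
    refine PrimeSpectrum.ext ?_
    change Ideal.comap (ρ i0).hom q = p.asIdeal
    have hle : Ideal.comap (ρ i0).hom q ≤ p.asIdeal := by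
      intro z hz
      by_contra hzp
      exact Set.disjoint_left.mp hqdisj hz ⟨z, hzp, rfl⟩
    have htq : t ∈ Ideal.comap (ρ i0).hom q := hqt (Ideal.subset_span rfl)
    rcases eq_or_lt_of_le hle with h | h
    · exact h
    · exfalso
      have hbotlt : (⟨⊥, Ideal.bot_prime⟩ : PrimeSpectrum Γ(X, ⊤)) <
          ⟨Ideal.comap (ρ i0).hom q, Ideal.IsPrime.comap _⟩ := by
        refine lt_of_le_of_ne bot_le ?_
        intro h'
        have : t ∈ (⊥ : Ideal Γ(X, ⊤)) := by
          rw [show (⊥ : Ideal Γ(X, ⊤)) =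
            (⟨Ideal.comap (ρ i0).hom q, Ideal.IsPrime.comap _⟩ :
              PrimeSpectrum Γ(X, ⊤)).asIdeal from congrArg PrimeSpectrum.asIdeal h']
          exact htq
        exact ht0 (Ideal.mem_bot.mp this)
      have hlt2 : (⟨Ideal.comap (ρ i0).hom q, Ideal.IsPrime.comap _⟩ :
          PrimeSpectrum Γ(X, ⊤)) < p := h
      let c : LTSeries (PrimeSpectrum Γ(X, ⊤)) :=
        (RelSeries.singleton _ (⟨⊥, Ideal.bot_prime⟩ : PrimeSpectrum Γ(X, ⊤))).snoc
          ⟨Ideal.comap (ρ i0).hom q, Ideal.IsPrime.comap _⟩ hbotlt |>.snoc p (by exact hlt2)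
      have hlen : c.length = 2 := rfl
      have h2 := Order.LTSeries.length_le_krullDim c
      rw [hlen] at h2
      have : (2 : WithBot ℕ∞) ≤ 1 := le_trans h2 hdim
      norm_num at this
end

section
/- Under the stated hypotheses on the matrix M, if v ∈ ℚⁿ satisfies v ⬝ (M v) = 0, then M v = 0; and if moreover v ≠ 0, then every coordinate of v is nonzero and all coordinates of v have the same sign, i.e. either v i > 0 for all i or v i < 0 for all i. -/
open Matrix

private lemma zariski_expand {n : ℕ} (M : Matrix (Fin n) (Fin n) ℚ) (w u : Fin n → ℚ) :
    w ⬝ᵥ M.mulVec u = ∑ i, ∑ j, w i * (M i j * u j) := by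
  simp [dotProduct, mulVec, Finset.mul_sum]

private lemma zariski_swap {n : ℕ} (M : Matrix (Fin n) (Fin n) ℚ)
    (hsymm : ∀ i j, M j i = M i j) (w u : Fin n → ℚ) :
    w ⬝ᵥ M.mulVec u = u ⬝ᵥ M.mulVec w := by
  rw [zariski_expand, zariski_expand, Finset.sum_comm]
  refine Finset.sum_congr rfl fun j _ => Finset.sum_congr rfl fun i _ => ?_
  rw [hsymm i j]; ring

private lemma zariski_kernel {n : ℕ} (M : Matrix (Fin n) (Fin n) ℚ)
    (hsymm : ∀ i j, M j i = M i j)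
    (hnegsemi : ∀ w : Fin n → ℚ, w ⬝ᵥ M.mulVec w ≤ 0)
    (v : Fin n → ℚ) (hv : v ⬝ᵥ M.mulVec v = 0) : M.mulVec v = 0 := by
  have key : ∀ w : Fin n → ℚ, w ⬝ᵥ M.mulVec v = 0 := by
    intro w
    by_contra hc
    set c := w ⬝ᵥ M.mulVec v with hcdef
    set a := w ⬝ᵥ M.mulVec w with hadef
    have ha : a ≤ 0 := hnegsemi w
    have h1a : (0:ℚ) < 1 - a := by linarith
    set t := c / (1 - a) with htdef
    have h1 : (v + t • w) ⬝ᵥ M.mulVec (v + t • w) ≤ 0 := hnegsemi _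
    have hexp : (v + t • w) ⬝ᵥ M.mulVec (v + t • w) = 2 * t * c + t ^ 2 * a := by
      simp only [mulVec_add, mulVec_smul, dotProduct_add, add_dotProduct,
        dotProduct_smul, smul_dotProduct, smul_eq_mul]
      rw [hv, zariski_swap M hsymm v w, ← hcdef, ← hadef]
      ring
    rw [hexp] at h1
    have heq : 2 * t * c + t ^ 2 * a = c ^ 2 * (2 - a) / (1 - a) ^ 2 := by
      rw [htdef]; field_simp; ring
    have hpos : 0 < c ^ 2 * (2 - a) / (1 - a) ^ 2 := by
      apply div_pos
      · have : 0 < c ^ 2 := by positivity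
        nlinarith
      · positivity
    rw [heq] at h1
    linarith
  funext j
  have := key (Pi.single j 1)
  simpa using this

/-- Let `M` be a symmetric rational `n × n` matrix (`n ≥ 1`) with nonnegative off-diagonal
entries which is connected and negative semidefinite. If `v ⬝ (M v) = 0`, then `M v = 0`; and
if moreover `v ≠ 0`, then every coordinate of `v` is nonzero and all coordinates of `v` have
the same sign. -/
theorem zariski_lemma_isotropic
    {n : ℕ} (hn : 1 ≤ n) (M : Matrix (Fin n) (Fin n) ℚ)
    (hsymm : ∀ i j, M j i = M i j)
    (hoff : ∀ i j, i ≠ j → 0 ≤ M i j)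
    (hconn : ∀ S : Finset (Fin n), S.Nonempty → S ≠ Finset.univ →
      ∃ i ∈ S, ∃ j ∉ S, M i j ≠ 0)
    (hnegsemi : ∀ w : Fin n → ℚ, w ⬝ᵥ M.mulVec w ≤ 0)
    (v : Fin n → ℚ) (hv : v ⬝ᵥ M.mulVec v = 0) :
    M.mulVec v = 0 ∧
      (v ≠ 0 → (∀ i, v i ≠ 0) ∧ ((∀ i, 0 < v i) ∨ (∀ i, v i < 0))) := by
  have hMv : M.mulVec v = 0 := zariski_kernel M hsymm hnegsemi v hv
  refine ⟨hMv, fun hv0 => ?_⟩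
  set u : Fin n → ℚ := fun k => |v k| with hudef
  have hule : v ⬝ᵥ M.mulVec v ≤ u ⬝ᵥ M.mulVec u := by
    rw [zariski_expand, zariski_expand]
    refine Finset.sum_le_sum fun i _ => Finset.sum_le_sum fun j _ => ?_
    by_cases hij : i = j
    · subst hij
      refine le_of_eq ?_
      have h := abs_mul_abs_self (v i)
      simp only [hudef]
      linear_combination (-(M i i)) * h
    · have h0 : 0 ≤ M i j := hoff i j hij
      simp only [hudef]
      nlinarith [le_abs_self (v i * v j), abs_mul (v i) (v j),
        abs_nonneg (v i), abs_nonneg (v j)]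
  have huq : u ⬝ᵥ M.mulVec u = 0 := le_antisymm (hnegsemi u) (by rw [hv] at hule; exact hule)
  have hMu : M.mulVec u = 0 := zariski_kernel M hsymm hnegsemi u huq
  -- every coordinate of v is nonzero
  have hvne : ∀ i, v i ≠ 0 := by
    by_contra hcon
    push_neg at hcon
    obtain ⟨j0, hj0⟩ := hcon
    set S : Finset (Fin n) := Finset.univ.filter (fun k => v k ≠ 0) with hSdef
    have hSne : S.Nonempty := by
      obtain ⟨i, hi⟩ := Function.ne_iff.mp hv0
      exact ⟨i, Finset.mem_filter.mpr ⟨Finset.mem_univ i, hi⟩⟩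
    have hSuniv : S ≠ Finset.univ := by
      intro h
      have : j0 ∈ S := h ▸ Finset.mem_univ j0
      exact (Finset.mem_filter.mp this).2 hj0
    obtain ⟨i, hi, j, hj, hM⟩ := hconn S hSne hSuniv
    have hvi : v i ≠ 0 := (Finset.mem_filter.mp hi).2
    have hvj : v j = 0 := by
      by_contra h
      exact hj (Finset.mem_filter.mpr ⟨Finset.mem_univ j, h⟩)
    have hij : i ≠ j := fun h => hvi (h ▸ hvj)
    have hMpos : 0 < M i j := lt_of_le_of_ne (hoff i j hij) (Ne.symm hM)
    have hsum : ∑ k, M j k * u k = 0 := by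
      have := congrFun hMu j
      simpa [mulVec, dotProduct] using this
    have hterm : ∀ k ∈ Finset.univ, 0 ≤ M j k * u k := by
      intro k _
      by_cases hk : j = k
      · subst hk; simp [hudef, hvj]
      · exact mul_nonneg (hoff j k hk) (abs_nonneg _)
    have := (Finset.sum_eq_zero_iff_of_nonneg hterm).mp hsum i (Finset.mem_univ i)
    rw [hsymm i j] at this
    have : M i j * u i ≠ 0 := by
      apply mul_ne_zero hM
      simpa [hudef] using hvi
    simp_all
  refine ⟨hvne, ?_⟩
  -- no mixed signs
  have hnomix : ¬ (∃ i j, 0 < v i ∧ v j < 0) := by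
    rintro ⟨i0, j0, hpos0, hneg0⟩
    have hMd : M.mulVec (u - v) = 0 := by
      rw [mulVec_sub, hMu, hMv, sub_zero]
    set S : Finset (Fin n) := Finset.univ.filter (fun k => 0 < v k) with hSdef
    have hSne : S.Nonempty := ⟨i0, by simp [hSdef, hpos0]⟩
    have hSuniv : S ≠ Finset.univ := by
      intro h
      have : j0 ∈ S := h ▸ Finset.mem_univ j0
      simp only [hSdef, Finset.mem_filter] at this
      linarith [this.2]
    obtain ⟨i, hi, j, hj, hM⟩ := hconn S hSne hSuniv
    have hvi : 0 < v i := (Finset.mem_filter.mp hi).2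
    have hvj : v j < 0 := by
      have : ¬ 0 < v j := fun h => hj (Finset.mem_filter.mpr ⟨Finset.mem_univ j, h⟩)
      exact lt_of_le_of_ne (not_lt.mp this) (hvne j)
    have hij : i ≠ j := fun h => absurd (h ▸ hvi) (not_lt.mpr hvj.le)
    have hMpos : 0 < M i j := lt_of_le_of_ne (hoff i j hij) (Ne.symm hM)
    have hsum : ∑ k, M i k * (u - v) k = 0 := by
      have := congrFun hMd i
      simpa [mulVec, dotProduct] using this
    have hterm : ∀ k ∈ Finset.univ, 0 ≤ M i k * (u - v) k := by
      intro k _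
      by_cases hk : 0 < v k
      · have : (u - v) k = 0 := by
          simp [hudef, abs_of_pos hk]
        simp [this]
      · have hik : i ≠ k := fun h => hk (h ▸ hvi)
        have : 0 ≤ (u - v) k := by
          simp only [Pi.sub_apply, hudef, sub_nonneg]
          exact le_abs_self _
        exact mul_nonneg (hoff i k hik) this
    have hzero := (Finset.sum_eq_zero_iff_of_nonneg hterm).mp hsum j (Finset.mem_univ j)
    have : 0 < M i j * (u - v) j := by
      apply mul_pos hMpos
      simp only [Pi.sub_apply, hudef, abs_of_neg hvj]
      linarith
    rw [hzero] at this
    exact lt_irrefl 0 this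
  -- conclude same sign
  set i0 : Fin n := ⟨0, hn⟩
  rcases (hvne i0).lt_or_gt with hneg | hpos
  · right
    intro k
    rcases (hvne k).lt_or_gt with h | h
    · exact h
    · exact absurd ⟨k, i0, h, hneg⟩ hnomix
  · left
    intro k
    rcases (hvne k).lt_or_gt with h | h
    · exact absurd ⟨i0, k, hpos, h⟩ hnomix
    · exact h
end

section
/- Under the stated hypotheses on the matrix M, if v ∈ ℚⁿ is nonzero and v i = 0 for some index i, then v ⬝ (M v) < 0. -/
open Matrix

/-- Let `M` be a symmetric rational `n × n` matrix (`n ≥ 1`) with nonnegative off-diagonal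
entries which is connected and negative semidefinite. If `v` is nonzero and has some vanishing
coordinate, then `v ⬝ (M v) < 0`. -/
theorem zariski_lemma_proper_support_negative
    {n : ℕ} (hn : 1 ≤ n) (M : Matrix (Fin n) (Fin n) ℚ)
    (hsymm : ∀ i j, M j i = M i j)
    (hoff : ∀ i j, i ≠ j → 0 ≤ M i j)
    (hconn : ∀ S : Finset (Fin n), S.Nonempty → S ≠ Finset.univ →
      ∃ i ∈ S, ∃ j ∉ S, M i j ≠ 0)
    (hnegsemi : ∀ w : Fin n → ℚ, w ⬝ᵥ M.mulVec w ≤ 0)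
    (v : Fin n → ℚ) (hv : v ≠ 0) (hzero : ∃ i, v i = 0) :
    v ⬝ᵥ M.mulVec v < 0 := by
  by_contra h
  have hq0 : v ⬝ᵥ M.mulVec v = 0 := le_antisymm (hnegsemi v) (not_lt.mp h)
  set w : Fin n → ℚ := fun i => |v i| with hw
  -- comparison
  have hcomp : v ⬝ᵥ M.mulVec v ≤ w ⬝ᵥ M.mulVec w := by
    simp only [dotProduct, mulVec, Finset.mul_sum]
    apply Finset.sum_le_sum
    intro i _
    apply Finset.sum_le_sum
    intro j _
    by_cases hij : i = j
    · subst hij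
      have habs : |v i| * |v i| = v i * v i := abs_mul_abs_self _
      simp only [hw]
      apply le_of_eq
      linear_combination (M i i) * habs.symm
    · have h1 : v i * v j ≤ |v i| * |v j| := by
        calc v i * v j ≤ |v i * v j| := le_abs_self _
        _ = |v i| * |v j| := abs_mul _ _
      have h2 : 0 ≤ M i j := hoff i j hij
      simp only [hw]
      nlinarith [mul_le_mul_of_nonneg_left h1 h2]
  have hqw : w ⬝ᵥ M.mulVec w = 0 :=
    le_antisymm (hnegsemi w) (hq0 ▸ hcomp)
  -- symmetry of the bilinear form
  have hsym2 : ∀ x y : Fin n → ℚ, x ⬝ᵥ M.mulVec y = y ⬝ᵥ M.mulVec x := by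
    intro x y
    simp only [dotProduct, mulVec, Finset.mul_sum]
    rw [Finset.sum_comm]
    apply Finset.sum_congr rfl; intro i _
    apply Finset.sum_congr rfl; intro j _
    rw [hsymm]
    ring
  -- M w = 0
  have hMw : ∀ u : Fin n → ℚ, u ⬝ᵥ M.mulVec w = 0 := by
    intro u
    set c := u ⬝ᵥ M.mulVec w with hc
    set a := u ⬝ᵥ M.mulVec u with hadef
    have ha : a ≤ 0 := hnegsemi u
    have hle : ∀ t : ℚ, 2*t*c + t^2*a ≤ 0 := by
      intro t
      have hexp : (w + t • u) ⬝ᵥ M.mulVec (w + t • u)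
          = (w ⬝ᵥ M.mulVec w) + 2*t*c + t^2*a := by
        rw [Matrix.mulVec_add, Matrix.mulVec_smul]
        simp only [dotProduct_add, add_dotProduct, dotProduct_smul, smul_dotProduct,
          smul_eq_mul]
        rw [show w ⬝ᵥ M.mulVec u = u ⬝ᵥ M.mulVec w from hsym2 w u, ← hc, ← hadef]
        ring
      have hx := hnegsemi (w + t • u)
      rw [hexp, hqw] at hx
      linarith
    by_contra hc0
    have h1 : (0:ℚ) < 1 - a := by linarith
    set t := c / (1 - a) with ht
    have hct : c = t * (1 - a) := by rw [ht]; exact (div_mul_cancel₀ c (ne_of_gt h1)).symm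
    have h2 := hle t
    rw [hct] at h2
    have ht0 : t ≠ 0 := div_ne_zero hc0 (ne_of_gt h1)
    have ht2 : 0 < t^2 := pow_two_pos_of_ne_zero ht0
    nlinarith [mul_nonneg ht2.le (neg_nonneg.mpr ha)]
  have hMw0 : ∀ j, M.mulVec w j = 0 := by
    intro j
    have := hMw (Pi.single j 1)
    rwa [single_dotProduct, one_mul] at this
  -- support argument
  set S : Finset (Fin n) := Finset.univ.filter (fun i => v i ≠ 0) with hS
  have hSne : S.Nonempty := by
    obtain ⟨i, hi⟩ := Function.ne_iff.mp hv
    exact ⟨i, by simp only [hS, Finset.mem_filter, Finset.mem_univ, true_and]; exact hi⟩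
  have hSnu : S ≠ Finset.univ := by
    obtain ⟨i0, hi0⟩ := hzero
    intro hE
    have : i0 ∈ S := hE ▸ Finset.mem_univ i0
    simp [hS, hi0] at this
  obtain ⟨i, hiS, j, hjS, hMij⟩ := hconn S hSne hSnu
  have hvi : v i ≠ 0 := by simpa [hS] using hiS
  have hvj : v j = 0 := by simpa [hS] using hjS
  have hij : i ≠ j := fun e => hvi (e ▸ hvj)
  have hsum : ∑ k, M j k * w k = 0 := by
    have := hMw0 j
    simpa [mulVec, dotProduct] using this
  have hterms : ∀ k ∈ Finset.univ, 0 ≤ M j k * w k := by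
    intro k _
    by_cases hk : k = j
    · subst hk
      simp [hw, hvj]
    · exact mul_nonneg (hoff j k (fun e => hk e.symm)) (abs_nonneg _)
  have hzero' := (Finset.sum_eq_zero_iff_of_nonneg hterms).mp hsum i (Finset.mem_univ i)
  have hMji : M j i ≠ 0 := by rw [hsymm]; exact hMij
  have hwi : w i ≠ 0 := fun e => hvi (abs_eq_zero.mp e)
  exact (mul_ne_zero hMji hwi) hzero'
end

section
/- Under the stated hypotheses on the matrix M, if u, v ∈ ℚⁿ satisfy u ⬝ (M u) = 0 and v ⬝ (M v) = 0 and u ≠ 0, then v is a rational multiple of u, i.e. there exists c ∈ ℚ with v = c • u. -/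
open Matrix

-- Lemma A: isotropic implies kernel
theorem aux_ker {n : ℕ} (M : Matrix (Fin n) (Fin n) ℚ)
    (hsymm : ∀ i j, M j i = M i j)
    (hnegsemi : ∀ w : Fin n → ℚ, w ⬝ᵥ M.mulVec w ≤ 0)
    (w : Fin n → ℚ) (hw : w ⬝ᵥ M.mulVec w = 0) : M.mulVec w = 0 := by
  funext j
  show M.mulVec w j = (0:ℚ)
  set a := M.mulVec w j with ha
  set b := M j j with hb
  have hb0 : b ≤ 0 := by
    have := hnegsemi (Pi.single j 1)
    simpa [dotProduct, mulVec, Pi.single_apply, Finset.mul_sum] using this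
  have hsym' : w ⬝ᵥ M.mulVec (Pi.single j 1) = a := by
    simp only [dotProduct, mulVec, Pi.single_apply, ha]
    rw [Finset.sum_congr rfl]
    intro i _
    rw [Finset.sum_congr rfl (fun k _ => by rw [mul_ite, mul_one, mul_zero]),
      Finset.sum_ite_eq' Finset.univ j (fun k => M i k)]
    simp [hsymm i j, mul_comm]
  have claim : ∀ t : ℚ, 2 * a * t + b * t ^ 2 ≤ 0 := by
    intro t
    have h := hnegsemi (w + t • (Pi.single j 1 : Fin n → ℚ))
    rw [mulVec_add, mulVec_smul, dotProduct_add, add_dotProduct, add_dotProduct,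
      dotProduct_smul, smul_dotProduct, smul_dotProduct, dotProduct_smul] at h
    have h1 : Pi.single j (1:ℚ) ⬝ᵥ M.mulVec w = a := by
      simp [dotProduct, Pi.single_apply, ha]
    have h2 : Pi.single j (1:ℚ) ⬝ᵥ M.mulVec (Pi.single j 1) = b := by
      simp [dotProduct, mulVec, Pi.single_apply, hb]
    rw [hsym', h1, h2, hw] at h
    simp only [smul_eq_mul] at h
    nlinarith [h]
  by_contra hne
  have ha2 : 0 < a ^ 2 := by positivity
  rcases lt_or_eq_of_le hb0 with hblt | hbe
  · have h := claim (-a / b)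
    have hbne : b ≠ 0 := ne_of_lt hblt
    have heq : 2 * a * (-a / b) + b * (-a / b) ^ 2 = -(a ^ 2 / b) := by
      field_simp; ring
    rw [heq] at h
    have : a ^ 2 / b < 0 := div_neg_of_pos_of_neg ha2 hblt
    linarith
  · have h := claim a
    rw [← hbe] at h
    nlinarith

-- Lemma B: nonneg kernel vector with a zero entry is zero
theorem aux_supp {n : ℕ} (M : Matrix (Fin n) (Fin n) ℚ)
    (hsymm : ∀ i j, M j i = M i j)
    (hoff : ∀ i j, i ≠ j → 0 ≤ M i j)
    (hconn : ∀ S : Finset (Fin n), S.Nonempty → S ≠ Finset.univ →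
      ∃ i ∈ S, ∃ j ∉ S, M i j ≠ 0)
    (a : Fin n → ℚ) (hker : M.mulVec a = 0) (hpos : ∀ i, 0 ≤ a i)
    (i0 : Fin n) (hzero : a i0 = 0) : a = 0 := by
  by_contra h0
  set S : Finset (Fin n) := Finset.univ.filter (fun i => a i ≠ 0) with hS
  have hSne : S.Nonempty := by
    rcases Function.ne_iff.mp h0 with ⟨i, hi⟩
    simp only [Pi.zero_apply] at hi
    exact ⟨i, by simp [hS, hi]⟩
  have hSnu : S ≠ Finset.univ := by
    intro h
    have : i0 ∈ S := h ▸ Finset.mem_univ i0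
    simp [hS, hzero] at this
  obtain ⟨i, hi, j, hj, hMij⟩ := hconn S hSne hSnu
  have hiS : a i ≠ 0 := by simpa [hS] using hi
  have hai : 0 < a i := lt_of_le_of_ne (hpos i) (Ne.symm hiS)
  have hij : i ≠ j := by rintro rfl; exact hj hi
  have hji : 0 < M j i := lt_of_le_of_ne (hoff j i hij.symm) (by rw [hsymm i j]; exact Ne.symm hMij)
  have hsum : (0:ℚ) < ∑ k, M j k * a k := by
    apply Finset.sum_pos' _ ⟨i, Finset.mem_univ i, mul_pos hji hai⟩
    intro k _
    rcases eq_or_ne (a k) 0 with hk | hk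
    · simp [hk]
    · have hkS : k ∈ S := by simp [hS, hk]
      have hkj : j ≠ k := by rintro rfl; exact hj hkS
      exact mul_nonneg (hoff j k hkj) (hpos k)
  have : M.mulVec a j = 0 := by rw [hker]; rfl
  rw [mulVec] at this
  exact absurd this (ne_of_gt hsum)

-- expansion of the quadratic form
theorem aux_expand {n : ℕ} (M : Matrix (Fin n) (Fin n) ℚ) (z : Fin n → ℚ) :
    z ⬝ᵥ M.mulVec z = ∑ i, ∑ j, M i j * (z i * z j) := by
  simp only [dotProduct, mulVec, Finset.mul_sum]
  exact Finset.sum_congr rfl fun i _ => Finset.sum_congr rfl fun j _ => by ring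

-- Lemma C: if w is isotropic then so is |w|
theorem aux_abs {n : ℕ} (M : Matrix (Fin n) (Fin n) ℚ)
    (hoff : ∀ i j, i ≠ j → 0 ≤ M i j)
    (hnegsemi : ∀ w : Fin n → ℚ, w ⬝ᵥ M.mulVec w ≤ 0)
    (w : Fin n → ℚ) (hw : w ⬝ᵥ M.mulVec w = 0) :
    (fun i => |w i|) ⬝ᵥ M.mulVec (fun i => |w i|) = 0 := by
  refine le_antisymm (hnegsemi _) ?_
  rw [aux_expand, ← hw, aux_expand]
  refine Finset.sum_le_sum fun i _ => Finset.sum_le_sum fun j _ => ?_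
  rcases eq_or_ne i j with rfl | hij
  · rw [abs_mul_abs_self]
  · refine mul_le_mul_of_nonneg_left ?_ (hoff i j hij)
    calc w i * w j ≤ |w i * w j| := le_abs_self _
    _ = |w i| * |w j| := abs_mul _ _

/-- Let `M` be a symmetric rational `n × n` matrix (`n ≥ 1`) with nonnegative off-diagonal
entries which is connected and negative semidefinite. If `u ⬝ (M u) = 0`, `v ⬝ (M v) = 0` and
`u ≠ 0`, then `v` is a rational multiple of `u`. -/
theorem zariski_lemma_isotropic_unique
    {n : ℕ} (hn : 1 ≤ n) (M : Matrix (Fin n) (Fin n) ℚ)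
    (hsymm : ∀ i j, M j i = M i j)
    (hoff : ∀ i j, i ≠ j → 0 ≤ M i j)
    (hconn : ∀ S : Finset (Fin n), S.Nonempty → S ≠ Finset.univ →
      ∃ i ∈ S, ∃ j ∉ S, M i j ≠ 0)
    (hnegsemi : ∀ w : Fin n → ℚ, w ⬝ᵥ M.mulVec w ≤ 0)
    (u v : Fin n → ℚ)
    (hu : u ⬝ᵥ M.mulVec u = 0) (hv : v ⬝ᵥ M.mulVec v = 0) (hu0 : u ≠ 0) :
    ∃ c : ℚ, v = c • u := by
  have hMu : M.mulVec u = 0 := aux_ker M hsymm hnegsemi u hu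
  have hMv : M.mulVec v = 0 := aux_ker M hsymm hnegsemi v hv
  have huabs : M.mulVec (fun i => |u i|) = 0 :=
    aux_ker M hsymm hnegsemi _ (aux_abs M hoff hnegsemi u hu)
  have hufull : ∀ i, u i ≠ 0 := by
    intro i hi
    have h := aux_supp M hsymm hoff hconn _ huabs (fun k => abs_nonneg _) i (by simp [hi])
    apply hu0
    funext k
    have := congrFun h k
    simpa using this
  set i0 : Fin n := ⟨0, hn⟩
  set c : ℚ := v i0 / u i0 with hc
  set w : Fin n → ℚ := v - c • u with hw0
  have hwker : M.mulVec w = 0 := by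
    rw [hw0, mulVec_sub, mulVec_smul, hMu, hMv]; simp
  have hwq : w ⬝ᵥ M.mulVec w = 0 := by rw [hwker, dotProduct_zero]
  have hwabs : M.mulVec (fun i => |w i|) = 0 :=
    aux_ker M hsymm hnegsemi _ (aux_abs M hoff hnegsemi w hwq)
  have hwi0 : w i0 = 0 := by
    have hui0 := hufull i0
    simp only [hw0, Pi.sub_apply, Pi.smul_apply, smul_eq_mul, hc]
    field_simp
    ring
  have hz := aux_supp M hsymm hoff hconn _ hwabs (fun k => abs_nonneg _) i0 (by simp [hwi0])
  refine ⟨c, ?_⟩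
  funext k
  have hk := congrFun hz k
  simp only [Pi.zero_apply, abs_eq_zero] at hk
  have hk' : v k - c * u k = 0 := by
    have := hk
    simpa [hw0, Pi.sub_apply, smul_eq_mul] using this
  have : v k = c * u k := by linarith
  simpa using this
end

section
/- Let V be a finite-dimensional real vector space and B a symmetric bilinear form on V, and assume there is a linear subspace W of V of codimension 1 (dim W = dim V − 1) on which B is negative definite, i.e. B(w, w) < 0 for every nonzero w ∈ W. If v₁, v₂ ∈ V satisfy B(v₁, v₁) = 0, B(v₂, v₂) = 0 and B(v₁, v₂) = 0, then v₁ and v₂ are linearly dependent. -/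
/-- Hodge-index-type statement: let `B` be a symmetric bilinear form on a finite-dimensional
real vector space `V` which is negative definite on a subspace `W` of codimension `1`. If
`v₁, v₂ ∈ V` satisfy `B v₁ v₁ = 0`, `B v₂ v₂ = 0` and `B v₁ v₂ = 0`, then `v₁` and `v₂` are
linearly dependent. -/
theorem linearDependent_of_isotropic_orthogonal
    {V : Type*} [AddCommGroup V] [Module ℝ V] [FiniteDimensional ℝ V]
    (B : V →ₗ[ℝ] V →ₗ[ℝ] ℝ) (hsymm : ∀ x y, B x y = B y x)
    (W : Submodule ℝ V) (hW : Module.finrank ℝ W = Module.finrank ℝ V - 1)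
    (hneg : ∀ w ∈ W, w ≠ 0 → B w w < 0)
    (v₁ v₂ : V) (h₁ : B v₁ v₁ = 0) (h₂ : B v₂ v₂ = 0) (h₁₂ : B v₁ v₂ = 0) :
    ¬ LinearIndependent ℝ ![v₁, v₂] := by
  intro hli
  set U : Submodule ℝ V := Submodule.span ℝ {v₁, v₂} with hUdef
  have hU : Module.finrank ℝ U = 2 := by
    have : Set.range ![v₁, v₂] = {v₁, v₂} := by
      simp [Matrix.range_cons, Matrix.range_empty, Set.pair_comm]
    rw [hUdef, ← this, finrank_span_eq_card hli, Fintype.card_fin]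
  have hiso : ∀ u ∈ U, B u u = 0 := by
    intro u hu
    rw [hUdef, Submodule.mem_span_pair] at hu
    obtain ⟨a, b, rfl⟩ := hu
    have h₂₁ : B v₂ v₁ = 0 := (hsymm v₂ v₁).trans h₁₂
    simp [map_add, map_smul, h₁, h₂, h₁₂, h₂₁]
  have hcard : 2 ≤ Module.finrank ℝ V := by
    simpa using hli.fintype_card_le_finrank
  have hsum := Submodule.finrank_sup_add_finrank_inf_eq U W
  have hle : Module.finrank ℝ ↥(U ⊔ W) ≤ Module.finrank ℝ V := Submodule.finrank_le _
  have hpos : 0 < Module.finrank ℝ ↥(U ⊓ W) := by omega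
  have hrk : 0 < Module.rank ℝ ↥(U ⊓ W) :=
    rank_pos_iff_nontrivial.mpr (Module.nontrivial_of_finrank_pos hpos)
  obtain ⟨w, hwmem, hw0⟩ := exists_mem_ne_zero_of_rank_pos hrk
  have hwn := hneg w (Submodule.mem_inf.mp hwmem).2 hw0
  have := hiso w (Submodule.mem_inf.mp hwmem).1
  linarith
end
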